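/- arXiv:2201.09411 — 3 statements merged into one kernel-verified Lean document; each statement's English description precedes it below -/
import Mathlib

section
/- Let ψ be an index function in the class S_{C_σ} and let φ be an index function covered by ψ (i.e. there are c > 0 and T̄ > 0 with c·ψ(1/t)/φ(1/t) ≤ min_{1/t ≤ λ ≤ M} ψ(λ)/φ(λ) for all t ≥ T̄). Then φ also belongs to S_{C'_σ} for some constant C'_σ > 0 (with the same exponent σ). -/
open Set

/-! For `λ ≥ 1/t` and `t ≥ T̄` the covering inequality turns the bound `ψ λ / ψ (1/t) ≤ C_σ e^{λtσ}`
into `φ λ / φ (1/t) ≤ (C_σ / c) e^{λtσ}`. In the remaining cases the quotient is bounded by a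
constant using only monotonicity of `φ`: by `1` when `λ ≤ 1/t`, and by `φ M / φ (1/T̄)` when
`t < T̄`; since `e^{λtσ} ≥ 1`, a constant bound suffices. -/

lemma div_le_div_of_monotoneOn {φ : ℝ → ℝ} (hpos : ∀ x, 0 < x → 0 < φ x)
    (hmono : MonotoneOn φ (Ioi 0)) {a b c d : ℝ} (ha : 0 < a) (hab : a ≤ b) (hc : 0 < c)
    (hcd : c ≤ d) : φ a / φ d ≤ φ b / φ c :=
  div_le_div₀ (hpos b (ha.trans_le hab)).le (hmono ha (ha.trans_le hab) hab) (hpos c hc)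
    (hmono hc (hc.trans_le hcd) hcd)

lemma div_le_div_div_of_mul_div_le {a b x y c : ℝ} (hc : 0 < c) (ha : 0 < a) (hb : 0 < b)
    (hx : 0 < x) (h : c * (x / a) ≤ y / b) : b / a ≤ y / x / c := by
  rw [div_div, le_div_iff₀ (by positivity)]
  calc b / a * (x * c) = b * (c * (x / a)) := by field_simp
    _ ≤ b * (y / b) := by gcongr
    _ = y := by field_simp

theorem stmt_4_general (φ ψ : ℝ → ℝ) (M σ Cσ c T : ℝ)
    (hσ : 0 < σ) (hc : 0 < c) (hT : 0 < T)
    -- index function hypotheses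
    (hφpos : ∀ x, 0 < x → 0 < φ x) (hφmono : StrictMonoOn φ (Ioi 0))
    (hψpos : ∀ x, 0 < x → 0 < ψ x)
    -- ψ ∈ S_{C_σ}
    (hψS : ∀ lam ∈ Ioc (0 : ℝ) M, ∀ t : ℝ, 0 < t →
      ψ lam / ψ (1 / t) ≤ Cσ * Real.exp (lam * t * σ))
    -- φ is covered by ψ
    (hcover : ∀ t : ℝ, T ≤ t → ∀ lam : ℝ, 1 / t ≤ lam → lam ≤ M →
      c * (ψ (1 / t) / φ (1 / t)) ≤ ψ lam / φ lam) :
    ∃ C' : ℝ, 0 < C' ∧ ∀ lam ∈ Ioc (0 : ℝ) M, ∀ t : ℝ, 0 < t →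
      φ lam / φ (1 / t) ≤ C' * Real.exp (lam * t * σ) := by
  have hmono := hφmono.monotoneOn
  set C' := max (Cσ / c) (max 1 (φ M / φ (1 / T)))
  refine ⟨C', lt_max_of_lt_right (lt_max_of_lt_left one_pos), ?_⟩
  rintro lam ⟨hlam, hlamM⟩ t ht
  have h1t : 0 < 1 / t := one_div_pos.2 ht
  have hE : 1 ≤ Real.exp (lam * t * σ) := Real.one_le_exp (by positivity)
  have hconst {B : ℝ} (hB : B ≤ C') (h : φ lam / φ (1 / t) ≤ B) :
      φ lam / φ (1 / t) ≤ C' * Real.exp (lam * t * σ) :=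
    h.trans (hB.trans (le_mul_of_one_le_right (by positivity) hE))
  rcases le_or_gt lam (1 / t) with hsmall | hlarge
  · refine hconst ((le_max_left _ _).trans (le_max_right _ _)) ?_
    simpa only [div_self (hφpos _ h1t).ne'] using
      div_le_div_of_monotoneOn hφpos hmono hlam hsmall h1t le_rfl
  rcases le_or_gt T t with hTt | htT
  · calc φ lam / φ (1 / t) ≤ ψ lam / ψ (1 / t) / c :=
          div_le_div_div_of_mul_div_le hc (hφpos _ h1t) (hφpos _ hlam) (hψpos _ h1t)
            (hcover t hTt lam hlarge.le hlamM)
      _ ≤ Cσ * Real.exp (lam * t * σ) / c := by gcongr; exact hψS lam ⟨hlam, hlamM⟩ t ht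
      _ = Cσ / c * Real.exp (lam * t * σ) := by ring
      _ ≤ C' * Real.exp (lam * t * σ) := by gcongr; exact le_max_left _ _
  · exact hconst ((le_max_right _ _).trans (le_max_right _ _))
      (div_le_div_of_monotoneOn hφpos hmono hlam hlamM (one_div_pos.2 hT)
        (one_div_le_one_div_of_le ht htT.le))

/-- If ψ is an index function in `S_{C_σ}` and φ is an index function covered by ψ,
then φ belongs to `S_{C'_σ}` for some `C'_σ > 0` (same exponent σ). -/
theorem stmt_4 (φ ψ : ℝ → ℝ) (M σ Cσ c T : ℝ)
    (hM : 0 < M) (hσ : 0 < σ) (hCσ : 0 < Cσ) (hc : 0 < c) (hT : 0 < T)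
    -- index function hypotheses
    (hφpos : ∀ x, 0 < x → 0 < φ x) (hφmono : StrictMonoOn φ (Ioi 0))
    (hφcont : ContinuousOn φ (Ioi 0))
    (hφ0 : Filter.Tendsto φ (nhdsWithin 0 (Ioi 0)) (nhds 0))
    (hψpos : ∀ x, 0 < x → 0 < ψ x) (hψmono : StrictMonoOn ψ (Ioi 0))
    (hψcont : ContinuousOn ψ (Ioi 0))
    (hψ0 : Filter.Tendsto ψ (nhdsWithin 0 (Ioi 0)) (nhds 0))
    -- ψ ∈ S_{C_σ}
    (hψS : ∀ lam ∈ Ioc (0 : ℝ) M, ∀ t : ℝ, 0 < t →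
      ψ lam / ψ (1 / t) ≤ Cσ * Real.exp (lam * t * σ))
    -- φ is covered by ψ
    (hcover : ∀ t : ℝ, T ≤ t → ∀ lam : ℝ, 1 / t ≤ lam → lam ≤ M →
      c * (ψ (1 / t) / φ (1 / t)) ≤ ψ lam / φ lam) :
    ∃ C' : ℝ, 0 < C' ∧ ∀ lam ∈ Ioc (0 : ℝ) M, ∀ t : ℝ, 0 < t →
      φ lam / φ (1 / t) ≤ C' * Real.exp (lam * t * σ) :=
  stmt_4_general φ ψ M σ Cσ c T hσ hc hT hφpos hφmono hψpos hψS hcover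
end

section
/- Let φ:(0,∞)→(0,∞) be an index function, σ ∈ (0,1), C_σ > 0, and M > 0, and suppose φ(λ)/φ(1/t) ≤ C_σ e^{λtσ} for all λ ∈ (0, M] and t > 0. Then for all t > 1/M: t·∫_{1/t}^{M} φ(λ) e^{-λt} dλ ≤ (C_σ/((1−σ) e^{1−σ}))·φ(1/t). -/
open Set Real

lemma exp_int (c a b : ℝ) (hc : c ≠ 0) :
    ∫ x in a..b, Real.exp (-(c * x)) = (Real.exp (-(c*a)) - Real.exp (-(c*b))) / c := by
  have h : ∀ x ∈ uIcc a b, HasDerivAt (fun x => -Real.exp (-(c*x)) / c) (Real.exp (-(c*x))) x := by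
    intro x _
    have : HasDerivAt (fun x => -(c*x)) (-c) x := by
      simpa using ((hasDerivAt_id x).const_mul c).fun_neg
    have := (this.exp).neg.div_const c
    exact this.congr_deriv (by rw [mul_neg, neg_neg, mul_div_assoc, div_self hc, mul_one])
  rw [intervalIntegral.integral_eq_sub_of_hasDerivAt h]
  · ring
  · exact (Real.continuous_exp.comp (by continuity)).intervalIntegrable a b

/-- If the index function `φ` satisfies `φ(λ)/φ(1/t) ≤ C_σ e^{λtσ}` on `(0,M]`,
then for all `t > 1/M`:
`t ∫_{1/t}^{M} φ(λ) e^{-λt} dλ ≤ (C_σ/((1-σ) e^{1-σ})) φ(1/t)`. -/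
theorem stmt_7 (φ : ℝ → ℝ) (σ Cσ M : ℝ)
    (hσ : σ ∈ Ioo (0 : ℝ) 1) (hCσ : 0 < Cσ) (hM : 0 < M)
    (hpos : ∀ x, 0 < x → 0 < φ x) (hmono : StrictMonoOn φ (Ioi 0))
    (hcont : ContinuousOn φ (Ioi 0))
    (h0 : Filter.Tendsto φ (nhdsWithin 0 (Ioi 0)) (nhds 0))
    (hS : ∀ lam ∈ Ioc (0 : ℝ) M, ∀ t : ℝ, 0 < t →
      φ lam / φ (1 / t) ≤ Cσ * Real.exp (lam * t * σ))
    (t : ℝ) (ht : 1 / M < t) :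
    t * ∫ lam in (1 / t)..M, φ lam * Real.exp (-(lam * t)) ≤
      Cσ / ((1 - σ) * Real.exp (1 - σ)) * φ (1 / t) := by
  have ht0 : 0 < t := lt_trans (by positivity) ht
  have h1t : 0 < 1 / t := by positivity
  have h1tM : 1 / t < M := by
    rw [div_lt_iff₀ ht0]
    rw [div_lt_iff₀ hM] at ht
    nlinarith
  have hφt : 0 < φ (1 / t) := hpos _ h1t
  have hs1 : 0 < 1 - σ := by linarith [hσ.2]
  set c : ℝ := t * (1 - σ) with hc
  have hc0 : 0 < c := by positivity
  have hIl : IntervalIntegrable (fun l => φ l * Real.exp (-(l * t))) MeasureTheory.volume (1/t) M := by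
    apply ContinuousOn.intervalIntegrable
    apply ContinuousOn.mul (hcont.mono ?_) (Continuous.continuousOn (by continuity))
    rw [uIcc_of_le h1tM.le]
    exact fun x hx => lt_of_lt_of_le h1t hx.1
  have hIr : IntervalIntegrable (fun l => Cσ * φ (1/t) * Real.exp (-(c * l))) MeasureTheory.volume (1/t) M :=
    (Continuous.intervalIntegrable (by continuity) _ _)
  have hpt : ∀ l ∈ Icc (1/t) M,
      φ l * Real.exp (-(l * t)) ≤ Cσ * φ (1/t) * Real.exp (-(c * l)) := by
    intro l hl
    have hl0 : 0 < l := lt_of_lt_of_le h1t hl.1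
    have h := hS l ⟨hl0, hl.2⟩ t ht0
    have hφl : φ l ≤ Cσ * Real.exp (l * t * σ) * φ (1/t) := by
      rw [div_le_iff₀ hφt] at h; linarith
    calc φ l * Real.exp (-(l * t))
        ≤ Cσ * Real.exp (l * t * σ) * φ (1/t) * Real.exp (-(l * t)) :=
          mul_le_mul_of_nonneg_right hφl (Real.exp_pos _).le
      _ = Cσ * φ (1/t) * Real.exp (-(c * l)) := by
          rw [show -(c*l) = l*t*σ + -(l*t) by rw [hc]; ring, Real.exp_add]; ring
  have hle := intervalIntegral.integral_mono_on h1tM.le hIl hIr hpt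
  rw [intervalIntegral.integral_const_mul, exp_int c _ _ hc0.ne'] at hle
  have hct : c * (1 / t) = 1 - σ := by rw [hc]; field_simp
  rw [hct] at hle
  calc t * ∫ lam in (1 / t)..M, φ lam * Real.exp (-(lam * t))
      ≤ t * (Cσ * φ (1/t) * ((Real.exp (-(1-σ)) - Real.exp (-(c*M))) / c)) :=
        mul_le_mul_of_nonneg_left hle ht0.le
    _ ≤ t * (Cσ * φ (1/t) * (Real.exp (-(1-σ)) / c)) := by
        gcongr
        exact sub_le_self _ (Real.exp_pos _).le
    _ = Cσ / ((1 - σ) * Real.exp (1 - σ)) * φ (1 / t) := by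
        rw [hc, Real.exp_neg]
        field_simp
end

section
/- Converse-result theorem (deterministic part): Let ω:[0,∞)→[0,∞) be nondecreasing with ω(0)=0 and ω(M)=R² for some R, M > 0, let σ∈(0,1), C_σ>0, and let φ be a nondecreasing positive function on (0,M] with φ(λ)/φ(1/t) ≤ C_σ e^{λtσ} for λ∈(0,M], t>0. Define E(t) = ∫₀^{M} e^{-λt} dω(λ). Then the following are equivalent: (i) there is C₃>0 with E(t) ≤ C₃ φ(1/t) for all t>0; (ii) there is C₄>0 with ω(λ) ≤ C₄ φ(λ) for all λ ∈ (0, M]. -/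
/-!
`E(t)` is the Laplace–Stieltjes transform of `ω` restricted to `(0, M]`.
Since `e^{-x/ℓ} ≥ e^{-1}` for `x ∈ (0, ℓ]`, we get `ω(ℓ) ≤ e · E(1/ℓ)`, which gives (i) ⇒ (ii).
Conversely, by the layer-cake formula `E(t) = ∫₀¹ ω-measure {x ∈ (0, M] | e^{-xt} ≥ s} ds`, and that
set lies in `(0, v]` with `v = min (-log s / t) M`. Under (ii), the growth condition on `φ` bounds its
measure `ω(v)` by `C₄ Cσ φ(1/t) e^{vtσ} ≤ C₄ Cσ φ(1/t) s^{-σ}`, which is integrable on `(0, 1)`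
because `σ < 1`.
-/

open Set MeasureTheory Real

theorem integrableOn_Ioo_zero_one_rpow_neg {σ : ℝ} (hσ : σ < 1) :
    IntegrableOn (fun s : ℝ => s ^ (-σ)) (Ioo 0 1) := by
  have h := intervalIntegral.intervalIntegrable_rpow' (a := 0) (b := 1) (r := -σ) (by linarith)
  rwa [intervalIntegrable_iff_integrableOn_Ioo_of_le zero_le_one] at h

theorem integral_Ioo_zero_one_rpow_neg {σ : ℝ} (hσ : σ < 1) :
    ∫ s in Ioo 0 1, s ^ (-σ) = 1 / (1 - σ) := by
  rw [← integral_Ioc_eq_integral_Ioo, ← intervalIntegral.integral_of_le zero_le_one,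
    integral_rpow (Or.inl (by linarith)), one_rpow, zero_rpow (by linarith), sub_zero,
    neg_add_eq_sub]

theorem integral_le_setIntegral_of_measureReal_le_le {α : Type*} [MeasurableSpace α]
    {μ : Measure α} {f : α → ℝ} {g : ℝ → ℝ} {b : ℝ} (hf : Integrable f μ) (hf0 : 0 ≤ᵐ[μ] f)
    (hfb : f ≤ᵐ[μ] fun _ => b) (hg : IntegrableOn g (Ioo 0 b))
    (hbound : ∀ s ∈ Ioo 0 b, μ.real {a | s ≤ f a} ≤ g s) :
    ∫ a, f a ∂μ ≤ ∫ s in Ioo 0 b, g s := by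
  rw [hf.integral_eq_integral_Ioc_meas_le hf0 hfb, integral_Ioc_eq_integral_Ioo]
  have hmeas : Measurable fun s : ℝ => μ.real {a | s ≤ f a} :=
    (Antitone.measurable (f := fun s => μ {a | s ≤ f a}) fun _ _ hst => measure_mono fun _ ha => hst.trans ha).ennreal_toReal
  have hint : IntegrableOn (fun s : ℝ => μ.real {a | s ≤ f a}) (Ioo 0 b) :=
    hg.mono' hmeas.aestronglyMeasurable <| ae_restrict_of_forall_mem measurableSet_Ioo
      fun s hs => by rw [norm_of_nonneg measureReal_nonneg]; exact hbound s hs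
  exact setIntegral_mono_on hint hg measurableSet_Ioo hbound

namespace StieltjesFunction

theorem measureReal_Ioc (f : StieltjesFunction ℝ) {a b : ℝ} (hab : a ≤ b) :
    f.measure.real (Ioc a b) = f b - f a := by
  rw [measureReal_def, f.measure_Ioc, ENNReal.toReal_ofReal (sub_nonneg.2 (f.mono hab))]

theorem mul_sub_le_setIntegral (f : StieltjesFunction ℝ) {g : ℝ → ℝ} {a b c : ℝ} {s : Set ℝ}
    (hab : a ≤ b) (hs : MeasurableSet s) (hsub : Ioc a b ⊆ s) (hg : IntegrableOn g s f.measure)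
    (hg0 : ∀ x ∈ s, 0 ≤ g x) (hc : ∀ x ∈ Ioc a b, c ≤ g x) :
    c * (f b - f a) ≤ ∫ x in s, g x ∂f.measure :=
  calc c * (f b - f a) = ∫ _ in Ioc a b, c ∂f.measure := by
        rw [setIntegral_const, f.measureReal_Ioc hab, smul_eq_mul, mul_comm]
    _ ≤ ∫ x in Ioc a b, g x ∂f.measure :=
        setIntegral_mono_on (integrableOn_const (by simp [f.measure_Ioc])) (hg.mono_set hsub)
          measurableSet_Ioc hc
    _ ≤ ∫ x in s, g x ∂f.measure :=
        setIntegral_mono_set hg (ae_restrict_of_forall_mem hs hg0) hsub.eventuallyLE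

theorem sub_le_exp_one_mul_setIntegral_exp (f : StieltjesFunction ℝ) {ℓ M : ℝ} (hℓ : 0 < ℓ)
    (hℓM : ℓ ≤ M) :
    f ℓ - f 0 ≤ exp 1 * ∫ x in Ioc 0 M, exp (-(x * (1 / ℓ))) ∂f.measure := by
  have hlower : exp (-1) * (f ℓ - f 0) ≤ ∫ x in Ioc 0 M, exp (-(x * (1 / ℓ))) ∂f.measure :=
    f.mul_sub_le_setIntegral hℓ.le measurableSet_Ioc (Ioc_subset_Ioc_right hℓM)
      (Continuous.integrableOn_Ioc (by fun_prop)) (fun _ _ => (exp_pos _).le)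
      fun x hx => exp_le_exp.2 <| neg_le_neg <| by
        rw [mul_one_div, div_le_one hℓ]; exact hx.2
  calc f ℓ - f 0 = exp 1 * (exp (-1) * (f ℓ - f 0)) := by
        rw [← mul_assoc, ← exp_add, add_neg_cancel, exp_zero, one_mul]
    _ ≤ _ := by gcongr

theorem measureReal_restrict_exp_ge_le (f : StieltjesFunction ℝ) {M t s : ℝ} (hM : 0 < M)
    (ht : 0 < t) (hs : s ∈ Ioo 0 1) :
    (f.measure.restrict (Ioc 0 M)).real {x | s ≤ exp (-(x * t))}
      ≤ f (min (-log s / t) M) - f 0 := by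
  have hv : 0 ≤ min (-log s / t) M :=
    le_min (div_nonneg (neg_nonneg.2 (log_nonpos hs.1.le hs.2.le)) ht.le) hM.le
  rw [measureReal_restrict_apply (measurableSet_le measurable_const (by fun_prop)),
    ← f.measureReal_Ioc hv]
  refine measureReal_mono (fun x ⟨hsx, hx0, hxM⟩ => ⟨hx0, le_min ?_ hxM⟩) (by simp [f.measure_Ioc])
  have hlog : log s ≤ -(x * t) := (log_le_iff_le_exp hs.1).2 hsx
  rw [le_div_iff₀ ht]
  linarith

end StieltjesFunction

theorem measureReal_exp_ge_le_mul_rpow {ω : StieltjesFunction ℝ} {φ : ℝ → ℝ} {M σ Cσ C : ℝ}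
    (hM : 0 < M) (hσ : 0 ≤ σ) (hCσ : 0 < Cσ)
    (hω0 : ω 0 = 0) (hφpos : ∀ x, 0 < x → 0 < φ x)
    (hφS : ∀ lam ∈ Ioc (0 : ℝ) M, ∀ t : ℝ, 0 < t →
      φ lam / φ (1 / t) ≤ Cσ * exp (lam * t * σ))
    (hωφ : ∀ lam ∈ Ioc (0 : ℝ) M, ω lam ≤ C * φ lam) (hC : 0 ≤ C) {t s : ℝ} (ht : 0 < t)
    (hs : s ∈ Ioo 0 1) :
    (ω.measure.restrict (Ioc 0 M)).real {x | s ≤ exp (-(x * t))}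
      ≤ C * Cσ * φ (1 / t) * s ^ (-σ) := by
  set v := min (-log s / t) M
  have hv : v ∈ Ioc 0 M :=
    ⟨lt_min (div_pos (neg_pos.2 (log_neg hs.1 hs.2)) ht) hM, min_le_right _ _⟩
  have hvt : v * t ≤ -log s := (le_div_iff₀ ht).1 (min_le_left _ _)
  have hφt : 0 < φ (1 / t) := hφpos _ (by positivity)
  have hφv : φ v ≤ Cσ * exp (v * t * σ) * φ (1 / t) := (div_le_iff₀ hφt).1 (hφS v hv t ht)
  have hexp : exp (v * t * σ) ≤ s ^ (-σ) := by
    rw [rpow_def_of_pos hs.1]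
    exact exp_le_exp.2 (by nlinarith)
  calc _ ≤ ω v - ω 0 := ω.measureReal_restrict_exp_ge_le hM ht hs
    _ ≤ C * φ v := by rw [hω0, sub_zero]; exact hωφ v hv
    _ ≤ C * (Cσ * exp (v * t * σ) * φ (1 / t)) := by gcongr
    _ ≤ C * (Cσ * s ^ (-σ) * φ (1 / t)) := by gcongr
    _ = C * Cσ * φ (1 / t) * s ^ (-σ) := by ring

theorem stmt_9_general (ω : StieltjesFunction ℝ) (φ : ℝ → ℝ) (M σ Cσ : ℝ)
    (hM : 0 < M) (hσ : σ ∈ Ioo (0 : ℝ) 1) (hCσ : 0 < Cσ)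
    (hω0 : ω 0 = 0)
    (hφpos : ∀ x, 0 < x → 0 < φ x)
    (hφS : ∀ lam ∈ Ioc (0 : ℝ) M, ∀ t : ℝ, 0 < t →
      φ lam / φ (1 / t) ≤ Cσ * Real.exp (lam * t * σ)) :
    (∃ C₃ : ℝ, 0 < C₃ ∧ ∀ t : ℝ, 0 < t →
        (∫ lam in Ioc (0 : ℝ) M, Real.exp (-(lam * t)) ∂ω.measure) ≤ C₃ * φ (1 / t)) ↔
    (∃ C₄ : ℝ, 0 < C₄ ∧ ∀ lam ∈ Ioc (0 : ℝ) M, ω lam ≤ C₄ * φ lam) := by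
  constructor
  · rintro ⟨C₃, hC₃, hE⟩
    refine ⟨exp 1 * C₃, by positivity, fun ℓ hℓ => ?_⟩
    calc ω ℓ = ω ℓ - ω 0 := by rw [hω0, sub_zero]
      _ ≤ exp 1 * ∫ x in Ioc 0 M, exp (-(x * (1 / ℓ))) ∂ω.measure :=
          ω.sub_le_exp_one_mul_setIntegral_exp hℓ.1 hℓ.2
      _ ≤ exp 1 * (C₃ * φ (1 / (1 / ℓ))) := by gcongr; exact hE _ (by positivity [hℓ.1])
      _ = exp 1 * C₃ * φ ℓ := by rw [one_div_one_div, mul_assoc]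
  · rintro ⟨C₄, hC₄, hωφ⟩
    refine ⟨C₄ * Cσ / (1 - σ), div_pos (by positivity) (by linarith [hσ.2]), fun t ht => ?_⟩
    calc ∫ x in Ioc 0 M, exp (-(x * t)) ∂ω.measure
        ≤ ∫ s in Ioo 0 1, C₄ * Cσ * φ (1 / t) * s ^ (-σ) :=
          integral_le_setIntegral_of_measureReal_le_le (Continuous.integrableOn_Ioc (by fun_prop))
            (ae_of_all _ fun _ => (exp_pos _).le)
            (ae_restrict_of_forall_mem measurableSet_Ioc fun x hx =>
              exp_le_one_iff.2 (neg_nonpos.2 (mul_pos hx.1 ht).le))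
            ((integrableOn_Ioo_zero_one_rpow_neg hσ.2).const_mul _)
            fun s hs => measureReal_exp_ge_le_mul_rpow hM hσ.1.le hCσ hω0 hφpos hφS hωφ
              hC₄.le ht hs
      _ = C₄ * Cσ / (1 - σ) * φ (1 / t) := by
          rw [integral_const_mul, integral_Ioo_zero_one_rpow_neg hσ.2]; ring

/-- Converse result (deterministic part): with `E(t) = ∫₀^M e^{-λt} dω(λ)`,
`E(t) = O(φ(1/t))` iff `ω(λ) = O(φ(λ))` on `(0,M]`. -/
theorem stmt_9 (ω : StieltjesFunction ℝ) (φ : ℝ → ℝ) (R M σ Cσ : ℝ)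
    (hR : 0 < R) (hM : 0 < M) (hσ : σ ∈ Ioo (0 : ℝ) 1) (hCσ : 0 < Cσ)
    (hω0 : ω 0 = 0) (hωM : ω M = R ^ 2)
    (hωnonneg : ∀ x, 0 ≤ x → 0 ≤ ω x)
    (hφmono : MonotoneOn φ (Ioi 0)) (hφpos : ∀ x, 0 < x → 0 < φ x)
    (hφS : ∀ lam ∈ Ioc (0 : ℝ) M, ∀ t : ℝ, 0 < t →
      φ lam / φ (1 / t) ≤ Cσ * Real.exp (lam * t * σ)) :
    (∃ C₃ : ℝ, 0 < C₃ ∧ ∀ t : ℝ, 0 < t →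
        (∫ lam in Ioc (0 : ℝ) M, Real.exp (-(lam * t)) ∂ω.measure) ≤ C₃ * φ (1 / t)) ↔
    (∃ C₄ : ℝ, 0 < C₄ ∧ ∀ lam ∈ Ioc (0 : ℝ) M, ω lam ≤ C₄ * φ lam) :=
  stmt_9_general ω φ M σ Cσ hM hσ hCσ hω0 hφpos hφS
end
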